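/- arXiv:0907.0002 — 4 statements merged into one kernel-verified Lean document; each statement's English description precedes it below -/
import Mathlib

section
/- Let C ⊆ {0,1}^(n+2) be a 1-perfect code, C_1 = { x : x00 ∈ C }, C' = { x : x01 ∈ C }, and C'' = { x : x10 ∈ C }. Then C' and C'' are disjoint, each has minimum distance at least 3, and C' ∪ C'' equals the set of all words of {0,1}^n at Hamming distance at least 2 from C_1. -/
private lemma zmod2cases : ∀ a : ZMod 2, a = 0 ∨ a = 1 := by decide

private lemma dist_append (n : ℕ) (x y : Fin n → ZMod 2) (a b : Fin 2 → ZMod 2) :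
    hammingDist (Fin.append x a) (Fin.append y b) = hammingDist x y + hammingDist a b := by
  simp only [hammingDist, Finset.card_filter]
  rw [Fin.sum_univ_add]
  simp [Fin.append_left, Fin.append_right]

private lemma eq_append (n : ℕ) (w : Fin (n+2) → ZMod 2) :
    w = Fin.append (fun i => w (Fin.castAdd 2 i)) (fun i => w (Fin.natAdd n i)) := by
  funext i
  refine Fin.addCases (fun j => ?_) (fun j => ?_) i <;> simp [Fin.append_left, Fin.append_right]

private lemma eta2 (b : Fin 2 → ZMod 2) : b = ![b 0, b 1] := by
  funext i; fin_cases i <;> simp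

/-- a midpoint exists for words at distance ≤ 2 -/
private lemma midpoint_exists {n : ℕ} (c c' : Fin n → ZMod 2) (h : hammingDist c c' ≤ 2) :
    ∃ y, hammingDist y c ≤ 1 ∧ hammingDist y c' ≤ 1 := by
  by_cases h1 : hammingDist c c' ≤ 1
  · exact ⟨c, by simp, h1⟩
  · push_neg at h1
    have h2 : hammingDist c c' = 2 := by omega
    -- pick a differing coordinate
    have hcard : (Finset.univ.filter fun i => c i ≠ c' i).card = 2 := h2
    have hne : (Finset.univ.filter fun i => c i ≠ c' i).Nonempty := by
      rw [← Finset.card_pos, hcard]; norm_num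
    obtain ⟨i, hi⟩ := hne
    have hci : c i ≠ c' i := (Finset.mem_filter.mp hi).2
    refine ⟨Function.update c i (c' i), ?_, ?_⟩
    · have : (Finset.univ.filter fun j => Function.update c i (c' i) j ≠ c j) = {i} := by
        ext j
        by_cases hj : j = i <;> simp [hj, Function.update, Ne.symm hci]
      simp only [hammingDist, this, Finset.card_singleton, le_refl]
    · have : (Finset.univ.filter fun j => Function.update c i (c' i) j ≠ c' j)
          = (Finset.univ.filter fun j => c j ≠ c' j).erase i := by
        ext j
        by_cases hj : j = i <;> simp [hj, Function.update]
      simp only [hammingDist, this, Finset.card_erase_of_mem hi, hcard]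
      omega

theorem shortened_parts (n : ℕ) (C : Set (Fin (n + 2) → ZMod 2))
    (hC : ∀ x : Fin (n + 2) → ZMod 2, ∃! c, c ∈ C ∧ hammingDist x c ≤ 1) :
    ({x : Fin n → ZMod 2 | Fin.append x ![0, 1] ∈ C} ∩
      {x : Fin n → ZMod 2 | Fin.append x ![1, 0] ∈ C} = ∅) ∧
    (∀ x y : Fin n → ZMod 2,
      Fin.append x ![0, 1] ∈ C → Fin.append y ![0, 1] ∈ C → x ≠ y → 3 ≤ hammingDist x y) ∧
    (∀ x y : Fin n → ZMod 2,
      Fin.append x ![1, 0] ∈ C → Fin.append y ![1, 0] ∈ C → x ≠ y → 3 ≤ hammingDist x y) ∧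
    ({x : Fin n → ZMod 2 | Fin.append x ![0, 1] ∈ C} ∪
      {x : Fin n → ZMod 2 | Fin.append x ![1, 0] ∈ C} =
      {y : Fin n → ZMod 2 | ∀ c : Fin n → ZMod 2,
        Fin.append c ![0, 0] ∈ C → 2 ≤ hammingDist y c}) := by
  -- two codewords at distance ≤ 2 are equal
  have close_eq : ∀ c c', c ∈ C → c' ∈ C → hammingDist c c' ≤ 2 → c = c' := by
    intro c c' hc hc' hd
    obtain ⟨y, hy1, hy2⟩ := midpoint_exists c c' hd
    obtain ⟨w, -, huniq⟩ := hC y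
    exact (huniq c ⟨hc, hy1⟩).trans (huniq c' ⟨hc', hy2⟩).symm
  have append_ne : ∀ (x y : Fin n → ZMod 2) (a b : Fin 2 → ZMod 2), a 0 ≠ b 0 →
      Fin.append x a ≠ Fin.append y b := by
    intro x y a b hab h
    apply hab
    have := congrFun h (Fin.natAdd n 0)
    simpa [Fin.append_right] using this
  refine ⟨?_, ?_, ?_, ?_⟩
  · ext x
    simp only [Set.mem_inter_iff, Set.mem_setOf_eq, Set.mem_empty_iff_false, iff_false, not_and]
    intro h1 h2
    have hd : hammingDist (Fin.append x ![0,1]) (Fin.append x ![1,0]) ≤ 2 := by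
      rw [dist_append]
      simp only [hammingDist_self, zero_add]
      exact le_of_eq (by decide)
    exact append_ne x x ![0,1] ![1,0] (by decide) (close_eq _ _ h1 h2 hd)
  · intro x y hx hy hxy
    by_contra h
    push_neg at h
    have hd : hammingDist (Fin.append x ![0,1]) (Fin.append y ![0,1]) ≤ 2 := by
      rw [dist_append, hammingDist_self]; omega
    have := close_eq _ _ hx hy hd
    apply hxy
    funext i
    have := congrFun this (Fin.castAdd 2 i)
    simpa [Fin.append_left] using this
  · intro x y hx hy hxy
    by_contra h
    push_neg at h
    have hd : hammingDist (Fin.append x ![1,0]) (Fin.append y ![1,0]) ≤ 2 := by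
      rw [dist_append, hammingDist_self]; omega
    have := close_eq _ _ hx hy hd
    apply hxy
    funext i
    have := congrFun this (Fin.castAdd 2 i)
    simpa [Fin.append_left] using this
  · ext y
    simp only [Set.mem_union, Set.mem_setOf_eq]
    constructor
    · rintro (hy | hy) c hc
      · by_contra h
        push_neg at h
        have hd : hammingDist (Fin.append y ![0,1]) (Fin.append c ![0,0]) ≤ 2 := by
          rw [dist_append]
          have : hammingDist (![0,1] : Fin 2 → ZMod 2) ![0,0] = 1 := by decide
          omega
        have heq := close_eq _ _ hy hc hd
        have := congrFun heq (Fin.natAdd n 1)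
        simp [Fin.append_right] at this
      · by_contra h
        push_neg at h
        have hd : hammingDist (Fin.append y ![1,0]) (Fin.append c ![0,0]) ≤ 2 := by
          rw [dist_append]
          have : hammingDist (![1,0] : Fin 2 → ZMod 2) ![0,0] = 1 := by decide
          omega
        exact append_ne y c ![1,0] ![0,0] (by decide) (close_eq _ _ hy hc hd)
    · intro hy
      obtain ⟨w, ⟨hwC, hwd⟩, -⟩ := hC (Fin.append y ![0,0])
      set z : Fin n → ZMod 2 := fun i => w (Fin.castAdd 2 i) with hz
      set b : Fin 2 → ZMod 2 := fun i => w (Fin.natAdd n i) with hb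
      have hw : w = Fin.append z b := eq_append n w
      rw [hw, dist_append] at hwd
      rw [hw] at hwC
      have hbeta : b = ![b 0, b 1] := eta2 b
      rcases zmod2cases (b 0) with h0 | h0 <;> rcases zmod2cases (b 1) with h1 | h1 <;>
        rw [h0, h1] at hbeta <;> rw [hbeta] at hwd hwC
      · -- b = ![0,0] : contradiction with hy
        exfalso
        have := hy z hwC
        have : hammingDist (![0,0] : Fin 2 → ZMod 2) ![0,0] = 0 := by decide
        omega
      · -- b = ![0,1]
        left
        have h2 : hammingDist (![0,0] : Fin 2 → ZMod 2) ![0,1] = 1 := by decide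
        have hyz : hammingDist y z = 0 := by omega
        rw [hammingDist_eq_zero] at hyz
        rwa [← hyz] at hwC
      · -- b = ![1,0]
        right
        have h2 : hammingDist (![0,0] : Fin 2 → ZMod 2) ![1,0] = 1 := by decide
        have hyz : hammingDist y z = 0 := by omega
        rw [hammingDist_eq_zero] at hyz
        rwa [← hyz] at hwC
      · -- b = ![1,1] : impossible
        exfalso
        have : hammingDist (![0,0] : Fin 2 → ZMod 2) ![1,1] = 2 := by decide
        omega
end

section
/- Let x be a vertex of the hypercube H^n all of whose neighbors lie in C_3 ∪ C_4, where every vertex of C_3 has exactly one neighbor in C_1, every vertex of C_1 has minimum distance 3 to every other vertex of C_1, and x is at distance at least 2 from C_1. Then the number of neighbors of x lying in C_3 is even (since the C_1-vertices at distance 2 from x each account for exactly two such neighbors). -/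
open Finset

lemma hd_card {n : ℕ} (x y : Fin n → ZMod 2) :
    hammingDist x y = (univ.filter fun i => x i ≠ y i).card := rfl

/-- If `d(x,c) = 2`, there are exactly two common neighbors of `x` and `c`. -/
lemma two_common {n : ℕ} (x c : Fin n → ZMod 2) (h : hammingDist x c = 2) :
    (univ.filter fun y => hammingDist x y = 1 ∧ hammingDist y c = 1).card = 2 := by
  classical
  set D : Finset (Fin n) := univ.filter fun i => x i ≠ c i with hD
  have hDcard : D.card = 2 := by rw [hd_card] at h; exact h
  have hbij : D.card = (univ.filter fun y => hammingDist x y = 1 ∧ hammingDist y c = 1).card := by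
    apply Finset.card_bij (fun i _ => Function.update x i (c i))
    · intro i hi
      have hic : x i ≠ c i := (mem_filter.mp hi).2
      have h1 : (univ.filter fun k => x k ≠ Function.update x i (c i) k) = {i} := by
        ext k
        simp only [mem_filter, mem_univ, true_and, mem_singleton]
        constructor
        · intro hk
          by_contra hne
          rw [Function.update_of_ne hne] at hk
          exact hk rfl
        · rintro rfl; rw [Function.update_self]; exact hic
      have h2 : (univ.filter fun k => Function.update x i (c i) k ≠ c k) = D.erase i := by
        ext k
        simp only [mem_filter, mem_univ, true_and, mem_erase, hD]
        constructor
        · intro hk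
          rcases eq_or_ne k i with rfl | hne
          · rw [Function.update_self] at hk; exact absurd rfl hk
          · rw [Function.update_of_ne hne] at hk; exact ⟨hne, hk⟩
        · rintro ⟨hne, hk⟩; rw [Function.update_of_ne hne]; exact hk
      simp only [mem_filter, mem_univ, true_and]
      constructor
      · rw [hd_card, h1, card_singleton]
      · rw [hd_card, h2, card_erase_of_mem hi, hDcard]
    · intro i hi j hj hij
      by_contra hne
      have := congrFun hij i
      rw [Function.update_self, Function.update_of_ne hne] at this
      exact (mem_filter.mp hi).2 this.symm
    · intro y hy
      obtain ⟨hxy, hyc⟩ := (mem_filter.mp hy).2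
      rw [hd_card] at hxy hyc
      obtain ⟨i, hi⟩ := card_eq_one.mp hxy
      obtain ⟨j, hj⟩ := card_eq_one.mp hyc
      have hyk : ∀ k, k ≠ i → y k = x k := by
        intro k hk
        by_contra hc'
        have : k ∈ ({i} : Finset (Fin n)) := hi ▸ mem_filter.mpr ⟨mem_univ k, fun e => hc' e.symm⟩
        exact hk (mem_singleton.mp this)
      have hyj : ∀ k, k ≠ j → y k = c k := by
        intro k hk
        by_contra hc'
        have : k ∈ ({j} : Finset (Fin n)) := hj ▸ mem_filter.mpr ⟨mem_univ k, hc'⟩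
        exact hk (mem_singleton.mp this)
      have hDsub : D ⊆ {i, j} := by
        intro k hk
        simp only [mem_insert, mem_singleton]
        by_contra hc'
        push_neg at hc'
        exact (mem_filter.mp hk).2 ((hyk k hc'.1).symm.trans (hyj k hc'.2))
      have hij' : i ≠ j := by
        rintro rfl
        have := card_le_card hDsub
        simp [hDcard] at this
      have hiD : i ∈ D := by
        have hDeq : D = {i, j} := eq_of_subset_of_card_le hDsub
          (by rw [hDcard, card_insert_of_notMem (by simp [hij']), card_singleton])
        rw [hDeq]; exact mem_insert_self i _
      refine ⟨i, hiD, ?_⟩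
      funext k
      rcases eq_or_ne k i with rfl | hne
      · rw [Function.update_self]; exact (hyj k hij').symm
      · rw [Function.update_of_ne hne]; exact (hyk k hne).symm
  rw [← hbij, hDcard]

/-- if every neighbor of `x` either lies in `C₃` (whose vertices have exactly
one neighbor in the distance-3 code `C₁`) or has no neighbor in `C₁` (i.e. lies in `C₄`),
and `d(x, C₁) ≥ 2`, then the number of neighbors of `x` lying in `C₃` is even. -/
theorem even_C3_neighbors (n : ℕ) (C1 C3 : Finset (Fin n → ZMod 2))
    (hC1 : ∀ u ∈ C1, ∀ v ∈ C1, u ≠ v → 3 ≤ hammingDist u v)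
    (hC3 : ∀ y ∈ C3, (C1.filter (fun c => hammingDist y c = 1)).card = 1)
    (x : Fin n → ZMod 2)
    (hx : ∀ c ∈ C1, 2 ≤ hammingDist x c)
    (hnbr : ∀ y : Fin n → ZMod 2, hammingDist x y = 1 →
      y ∈ C3 ∨ ∀ c ∈ C1, hammingDist y c ≠ 1) :
    Even (C3.filter (fun y => hammingDist x y = 1)).card := by
  classical
  set S := C3.filter (fun y => hammingDist x y = 1) with hS
  set T := C1.filter (fun c => hammingDist x c = 2) with hT
  have key : S = T.biUnion (fun c => S.filter (fun y => hammingDist y c = 1)) := by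
    ext y
    constructor
    · intro hy
      obtain ⟨hy3, hxy⟩ := mem_filter.mp hy
      obtain ⟨c, hc⟩ := card_eq_one.mp (hC3 y hy3)
      have hcmem := mem_filter.mp (hc ▸ mem_singleton_self c)
      have hdxc : hammingDist x c = 2 := by
        have h1 : hammingDist x c ≤ 2 := by
          have := hammingDist_triangle x y c
          omega
        have h2 := hx c hcmem.1
        omega
      exact mem_biUnion.mpr ⟨c, mem_filter.mpr ⟨hcmem.1, hdxc⟩,
        mem_filter.mpr ⟨hy, hcmem.2⟩⟩
    · intro hy
      obtain ⟨c, _, hy'⟩ := mem_biUnion.mp hy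
      exact (mem_filter.mp hy').1
  have hdisj : ∀ c ∈ T, ∀ c' ∈ T, c ≠ c' →
      Disjoint (S.filter (fun y => hammingDist y c = 1)) (S.filter (fun y => hammingDist y c' = 1)) := by
    intro c hc c' hc' hne
    rw [Finset.disjoint_left]
    intro y hy hy'
    have hy3 : y ∈ C3 := (mem_filter.mp ((mem_filter.mp hy).1)).1
    have hsub : ({c, c'} : Finset (Fin n → ZMod 2)) ⊆ C1.filter (fun d => hammingDist y d = 1) := by
      intro d hd
      rcases mem_insert.mp hd with rfl | hd
      · exact mem_filter.mpr ⟨(mem_filter.mp hc).1, (mem_filter.mp hy).2⟩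
      · rw [mem_singleton.mp hd]
        exact mem_filter.mpr ⟨(mem_filter.mp hc').1, (mem_filter.mp hy').2⟩
    have := card_le_card hsub
    rw [hC3 y hy3, card_insert_of_notMem (by simp [hne]), card_singleton] at this
    omega
  have hterm : ∀ c ∈ T, (S.filter (fun y => hammingDist y c = 1)).card = 2 := by
    intro c hc
    obtain ⟨hc1, hdxc⟩ := mem_filter.mp hc
    have heq : S.filter (fun y => hammingDist y c = 1)
        = univ.filter fun y => hammingDist x y = 1 ∧ hammingDist y c = 1 := by
      ext y
      simp only [mem_filter, mem_univ, true_and, hS]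
      constructor
      · rintro ⟨⟨_, hxy⟩, hyc⟩; exact ⟨hxy, hyc⟩
      · rintro ⟨hxy, hyc⟩
        rcases hnbr y hxy with h3 | h4
        · exact ⟨⟨h3, hxy⟩, hyc⟩
        · exact absurd hyc (h4 c hc1)
    rw [heq]
    exact two_common x c hdxc
  rw [key, card_biUnion hdisj]
  rw [Finset.sum_congr rfl hterm, Finset.sum_const, smul_eq_mul]
  exact ⟨T.card, by ring⟩
end

section
/- Let B be a multiset of words of {0,1}^n such that every word of {0,1}^n is within Hamming distance 1 of exactly two elements of B (counted with multiplicity), i.e., B is a twofold 1-perfect code. Then any element of B with multiplicity 2 is at distance at least 3 from every other element of B. -/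
lemma hamming_midpoint {n : ℕ} (b c : Fin n → ZMod 2) (h : hammingDist b c ≤ 2) :
    ∃ x : Fin n → ZMod 2, hammingDist x b ≤ 1 ∧ hammingDist x c ≤ 1 := by
  rcases le_or_gt (hammingDist b c) 1 with h1 | h1
  · exact ⟨c, by rwa [hammingDist_comm], by simp⟩
  · have h2 : hammingDist b c = 2 := le_antisymm h h1
    have hcard : (Finset.univ.filter fun i => b i ≠ c i).card = 2 := h2
    obtain ⟨i, hi⟩ : ∃ i, i ∈ Finset.univ.filter fun i => b i ≠ c i := by
      have : 0 < (Finset.univ.filter fun i => b i ≠ c i).card := by omega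
      exact Finset.card_pos.mp this
    have hbc : b i ≠ c i := (Finset.mem_filter.mp hi).2
    refine ⟨Function.update b i (c i), ?_, ?_⟩
    · have : (Finset.univ.filter fun j => Function.update b i (c i) j ≠ b j) = {i} := by
        ext j
        simp only [Finset.mem_filter, Finset.mem_univ, true_and, Finset.mem_singleton]
        rcases eq_or_ne j i with rfl | hji
        · simp [Function.update_self, Ne.symm hbc]
        · simp [Function.update_of_ne hji, hji]
      show (Finset.univ.filter fun j => Function.update b i (c i) j ≠ b j).card ≤ 1
      rw [this]; simp
    · have : (Finset.univ.filter fun j => Function.update b i (c i) j ≠ c j)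
          = (Finset.univ.filter fun j => b j ≠ c j) \ {i} := by
        ext j
        simp only [Finset.mem_filter, Finset.mem_univ, true_and, Finset.mem_sdiff,
          Finset.mem_singleton]
        rcases eq_or_ne j i with rfl | hji
        · simp [Function.update_self]
        · simp [Function.update_of_ne hji, hji]
      show (Finset.univ.filter fun j => Function.update b i (c i) j ≠ c j).card ≤ 1
      rw [this, Finset.card_sdiff_of_subset (by simpa using hi), hcard]
      simp

/-- in a twofold 1-perfect code (multiset) `B`, any element of
multiplicity 2 is at distance at least 3 from every other element of `B`. -/
theorem twofold_multiplicityTwo_isolated (n : ℕ) (B : Multiset (Fin n → ZMod 2))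
    (hB : ∀ x : Fin n → ZMod 2, B.countP (fun b => hammingDist x b ≤ 1) = 2)
    (b : Fin n → ZMod 2) (hb : B.count b = 2) :
    ∀ c ∈ B, c ≠ b → 3 ≤ hammingDist b c := by
  intro c hc hne
  by_contra hlt
  push_neg at hlt
  obtain ⟨x, hxb, hxc⟩ := hamming_midpoint b c (by omega)
  set S : Multiset (Fin n → ZMod 2) := b ::ₘ b ::ₘ c ::ₘ 0 with hS
  have hSle : S ≤ B := by
    rw [Multiset.le_iff_count]
    intro a
    rcases eq_or_ne a b with rfl | hab
    · simp [hS, Multiset.count_cons, Ne.symm hne, hb]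
    · rcases eq_or_ne a c with rfl | hac
      · simp only [hS, Multiset.count_cons]
        simp [hab]
        exact Multiset.one_le_count_iff_mem.mpr hc
      · simp [hS, Multiset.count_cons, hab, hac]
  have h3 : 3 ≤ Multiset.countP (fun b => hammingDist x b ≤ 1) S := by
    simp only [hS, Multiset.countP_cons, Multiset.countP_zero, if_pos hxb, if_pos hxc]
    omega
  have := Multiset.countP_le_of_le (fun b => hammingDist x b ≤ 1) hSle
  rw [hB x] at this
  omega
end

section
/- Let {C_12, C_3, C_4} be an equitable partition of H^n with parameter matrix ((1,n-1,0),(2,n-4,2),(0,n-1,1)). Define in H^(n+1): G_1 = { xα : x ∈ C_12, α = weight(x) mod 2 }, G_4 = { xβ : x ∈ C_4, β = weight(x)+1 mod 2 }, G_2 = { y : d(y, G_1) = 1 }, G_3 = { y : d(y, G_4) = 1 }. Then {G_1, G_2, G_3, G_4} is an equitable partition of H^(n+1) with parameter matrix ((0,n+1,0,0),(2,0,n-1,0),(0,n-1,0,2),(0,0,n+1,0)). -/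
/-- Number of neighbors (words at Hamming distance 1) of `x` inside `S`. -/
def nbrCount {n : ℕ} (S : Finset (Fin n → ZMod 2)) (x : Fin n → ZMod 2) : ℕ :=
  (S.filter (fun y => hammingDist x y = 1)).card

lemma zmod2_cases (a b : ZMod 2) : a = b ∨ a = b + 1 := by revert a b; decide
lemma zmod2_ne_iff {a b : ZMod 2} : a ≠ b ↔ a = b + 1 := by revert a b; decide
lemma zmod2_ne_succ (a : ZMod 2) : a ≠ a + 1 := by revert a; decide
lemma zmod2_succ_ne (a : ZMod 2) : a + 1 ≠ a := by revert a; decide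
lemma zmod2_add_self (a : ZMod 2) : a + a = 0 := by revert a; decide

lemma hamming_snoc {n : ℕ} (x z : Fin n → ZMod 2) (α β : ZMod 2) :
    hammingDist (Fin.snoc x α : Fin (n+1) → ZMod 2) (Fin.snoc z β) =
    hammingDist x z + if α = β then 0 else 1 := by
  classical
  unfold hammingDist
  simp only [Finset.card_filter]
  rw [Fin.sum_univ_castSucc]
  simp [Fin.snoc_castSucc, Fin.snoc_last]

lemma sum_dist_one {n : ℕ} {x z : Fin n → ZMod 2} (h : hammingDist x z = 1) :
    ∑ i, z i = ∑ i, x i + 1 := by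
  have key : ∑ i, (x i + z i) = ((hammingDist x z : ℕ) : ZMod 2) := by
    unfold hammingDist
    rw [Finset.card_filter, Nat.cast_sum]
    congr 1; funext i
    rcases zmod2_cases (x i) (z i) with h | h <;> simp [h]
    · exact zmod2_add_self _
    · rw [add_comm (z i) 1, add_assoc, zmod2_add_self, add_zero]
  rw [h] at key
  have h2 : ∑ i, x i + ∑ i, z i = 1 := by rw [← Finset.sum_add_distrib, key]; norm_num
  have h3 : ∀ a b : ZMod 2, a + b = 1 → b = a + 1 := by decide
  exact h3 _ _ h2

lemma snoc_injective {n : ℕ} (f : (Fin n → ZMod 2) → ZMod 2) :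
    Function.Injective (fun z : Fin n → ZMod 2 => (Fin.snoc z (f z) : Fin (n+1) → ZMod 2)) := by
  intro a b h
  have := congrArg Fin.init h
  simpa [Fin.init_snoc] using this

lemma mem_image_snoc {n : ℕ} (C : Finset (Fin n → ZMod 2)) (f : (Fin n → ZMod 2) → ZMod 2)
    (x : Fin n → ZMod 2) (α : ZMod 2) :
    (Fin.snoc x α : Fin (n+1) → ZMod 2) ∈ C.image (fun z => Fin.snoc z (f z)) ↔
      x ∈ C ∧ f x = α := by
  constructor
  · rintro h
    rw [Finset.mem_image] at h
    obtain ⟨z, hz, he⟩ := h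
    have h1 : z = x := by
      have := congrArg Fin.init he; simpa [Fin.init_snoc] using this
    have h2 : f z = α := by
      have := congrArg (fun g => g (Fin.last n)) he; simpa [Fin.snoc_last] using this
    subst h1; exact ⟨hz, h2⟩
  · rintro ⟨h1, h2⟩
    exact Finset.mem_image.2 ⟨x, h1, by rw [h2]⟩

lemma nbrCount_image_snoc {n : ℕ} (C : Finset (Fin n → ZMod 2)) (c : ZMod 2)
    (x : Fin n → ZMod 2) (α : ZMod 2) :
    nbrCount (C.image (fun z => Fin.snoc z (∑ i, z i + c))) (Fin.snoc x α) =
      if (∑ i, x i) + c = α then 0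
      else (if x ∈ C then 1 else 0) + nbrCount C x := by
  classical
  unfold nbrCount
  rw [Finset.filter_image, Finset.card_image_of_injective _ (snoc_injective _)]
  by_cases hα : (∑ i, x i) + c = α
  · rw [if_pos hα]
    rw [Finset.card_eq_zero, Finset.filter_eq_empty_iff]
    intro z hz
    rw [hamming_snoc]
    intro hcon
    rcases Nat.eq_zero_or_pos (hammingDist x z) with h0 | h0
    · have hzx : x = z := hammingDist_eq_zero.mp h0
      subst hzx
      rw [h0, if_pos hα.symm] at hcon; omega
    · have h1 : hammingDist x z = 1 := by
        by_cases he : α = ∑ i, z i + c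
        · rw [if_pos he] at hcon; omega
        · rw [if_neg he] at hcon; omega
      have hs := sum_dist_one h1
      have hne : α ≠ ∑ i, z i + c := by
        rw [hs]
        have h3 : ∀ s c α : ZMod 2, s + c = α → ¬(α = s + 1 + c) := by decide
        exact h3 _ _ _ hα
      rw [if_neg hne, h1] at hcon; omega
  · rw [if_neg hα]
    have hset : C.filter (fun z => (fun z => hammingDist (Fin.snoc x α : Fin (n+1) → ZMod 2) (Fin.snoc z (∑ i, z i + c))) z = 1)
        = C.filter (fun z => z = x ∨ hammingDist x z = 1) := by
      apply Finset.filter_congr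
      intro z _
      simp only [hamming_snoc]
      constructor
      · intro hcon
        by_cases he : α = ∑ i, z i + c
        · rw [if_pos he] at hcon
          right; omega
        · rw [if_neg he] at hcon
          left
          have : hammingDist x z = 0 := by omega
          exact (hammingDist_eq_zero.mp this).symm
      · rintro (rfl | h1)
        · have he : α ≠ ∑ i, z i + c := fun h => hα h.symm
          rw [if_neg he, hammingDist_self]
        · have := sum_dist_one h1
          have he : α = ∑ i, z i + c := by
            rw [this]
            have h3 : ∀ s c α : ZMod 2, ¬(s + c = α) → α = s + 1 + c := by decide
            exact h3 _ _ _ hα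
          rw [if_pos he, h1]
    rw [hset, Finset.filter_or, Finset.card_union_of_disjoint, Finset.filter_eq']
    · by_cases hx : x ∈ C <;> simp [hx, nbrCount]
    · rw [Finset.disjoint_filter]
      rintro z _ rfl h
      rw [hammingDist_self] at h; omega

lemma nbrCount_image_snoc0 {n : ℕ} (C : Finset (Fin n → ZMod 2))
    (x : Fin n → ZMod 2) (α : ZMod 2) :
    nbrCount (C.image (fun z => Fin.snoc z (∑ i, z i))) (Fin.snoc x α) =
      if (∑ i, x i) = α then 0
      else (if x ∈ C then 1 else 0) + nbrCount C x := by
  have he : (fun z : Fin n → ZMod 2 => (Fin.snoc z (∑ i, z i) : Fin (n+1) → ZMod 2))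
      = fun z : Fin n → ZMod 2 => (Fin.snoc z (∑ i, z i + 0) : Fin (n+1) → ZMod 2) := by
    funext z; rw [add_zero]
  rw [he, nbrCount_image_snoc, add_zero]

lemma nbrCount_union {n : ℕ} {A B : Finset (Fin n → ZMod 2)} (h : Disjoint A B)
    (x : Fin n → ZMod 2) : nbrCount (A ∪ B) x = nbrCount A x + nbrCount B x := by
  unfold nbrCount
  rw [Finset.filter_union, Finset.card_union_of_disjoint]
  exact Finset.disjoint_filter_filter h

lemma nbrCount_univ {n : ℕ} (x : Fin n → ZMod 2) : nbrCount Finset.univ x = n := by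
  classical
  unfold nbrCount
  have hset : (Finset.univ.filter (fun y => hammingDist x y = 1)) =
      Finset.univ.image (fun i : Fin n => Function.update x i (x i + 1)) := by
    ext y
    simp only [Finset.mem_filter, Finset.mem_univ, true_and, Finset.mem_image]
    constructor
    · intro h
      unfold hammingDist at h
      rw [Finset.card_eq_one] at h
      obtain ⟨i, hi⟩ := h
      refine ⟨i, ?_⟩
      funext j
      by_cases hj : j = i
      · subst hj
        have hne : x j ≠ y j := by
          have hm : j ∈ ({j} : Finset (Fin n)) := Finset.mem_singleton_self j
          rw [← hi] at hm
          exact (Finset.mem_filter.mp hm).2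
        rw [Function.update_self]
        exact (zmod2_ne_iff.mp hne.symm).symm
      · rw [Function.update_of_ne hj]
        have hm : j ∉ ({i} : Finset (Fin n)) := by simp [hj]
        rw [← hi] at hm
        have := fun h' => hm (Finset.mem_filter.mpr ⟨Finset.mem_univ j, h'⟩)
        exact not_not.mp this
    · rintro ⟨i, rfl⟩
      unfold hammingDist
      rw [Finset.card_eq_one]
      refine ⟨i, ?_⟩
      ext j
      simp only [Finset.mem_filter, Finset.mem_univ, true_and, Finset.mem_singleton]
      by_cases hj : j = i
      · subst hj; simp [Function.update_self, zmod2_ne_succ]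
      · simp [Function.update_of_ne hj, hj]
  rw [hset, Finset.card_image_of_injective, Finset.card_univ, Fintype.card_fin]
  intro a b h
  by_contra hab
  have h2 : Function.update x a (x a + 1) a = Function.update x b (x b + 1) a := congrFun h a
  rw [Function.update_self, Function.update_of_ne hab] at h2
  exact zmod2_ne_succ _ h2.symm

/-- the "extended" partition `{G₁,G₂,G₃,G₄}` of `H^(n+1)` obtained from an
equitable partition `{C₁₂,C₃,C₄}` of `H^n` with parameters `((1,n-1,0),(2,n-4,2),(0,n-1,1))`
is an equitable partition with parameters
`((0,n+1,0,0),(2,0,n-1,0),(0,n-1,0,2),(0,0,n+1,0))`. -/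
theorem extended_partition_equitable (n : ℕ) (C12 C3 C4 : Finset (Fin n → ZMod 2))
    (hd1 : Disjoint C12 C3) (hd2 : Disjoint C12 C4) (hd3 : Disjoint C3 C4)
    (hcover : C12 ∪ C3 ∪ C4 = Finset.univ)
    (hne1 : C12.Nonempty) (hne3 : C3.Nonempty) (hne4 : C4.Nonempty)
    (h1 : ∀ x ∈ C12, nbrCount C12 x = 1 ∧ nbrCount C3 x = n - 1 ∧ nbrCount C4 x = 0)
    (h3 : ∀ x ∈ C3, nbrCount C12 x = 2 ∧ nbrCount C3 x = n - 4 ∧ nbrCount C4 x = 2)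
    (h4 : ∀ x ∈ C4, nbrCount C12 x = 0 ∧ nbrCount C3 x = n - 1 ∧ nbrCount C4 x = 1)
    (G1 G2 G3 G4 : Finset (Fin (n + 1) → ZMod 2))
    (hG1 : G1 = C12.image (fun x => Fin.snoc x (∑ i, x i)))
    (hG4 : G4 = C4.image (fun x => Fin.snoc x (∑ i, x i + 1)))
    (hG2 : G2 = Finset.univ.filter (fun y => y ∉ G1 ∧ ∃ g ∈ G1, hammingDist y g = 1))
    (hG3 : G3 = Finset.univ.filter (fun y => y ∉ G4 ∧ ∃ g ∈ G4, hammingDist y g = 1)) :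
    (Disjoint G1 G2 ∧ Disjoint G1 G3 ∧ Disjoint G1 G4 ∧
      Disjoint G2 G3 ∧ Disjoint G2 G4 ∧ Disjoint G3 G4 ∧
      G1 ∪ G2 ∪ G3 ∪ G4 = Finset.univ ∧
      G1.Nonempty ∧ G2.Nonempty ∧ G3.Nonempty ∧ G4.Nonempty) ∧
    (∀ y ∈ G1, nbrCount G1 y = 0 ∧ nbrCount G2 y = n + 1 ∧
      nbrCount G3 y = 0 ∧ nbrCount G4 y = 0) ∧
    (∀ y ∈ G2, nbrCount G1 y = 2 ∧ nbrCount G2 y = 0 ∧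
      nbrCount G3 y = n - 1 ∧ nbrCount G4 y = 0) ∧
    (∀ y ∈ G3, nbrCount G1 y = 0 ∧ nbrCount G2 y = n - 1 ∧
      nbrCount G3 y = 0 ∧ nbrCount G4 y = 2) ∧
    (∀ y ∈ G4, nbrCount G1 y = 0 ∧ nbrCount G2 y = 0 ∧
      nbrCount G3 y = n + 1 ∧ nbrCount G4 y = 0) := by
  classical
  -- basic facts
  have hcov : ∀ x : Fin n → ZMod 2, x ∈ C12 ∨ x ∈ C3 ∨ x ∈ C4 := by
    intro x
    have : x ∈ C12 ∪ C3 ∪ C4 := hcover ▸ Finset.mem_univ x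
    rcases Finset.mem_union.mp this with h | h
    · rcases Finset.mem_union.mp h with h | h
      · exact Or.inl h
      · exact Or.inr (Or.inl h)
    · exact Or.inr (Or.inr h)
  have hd123 : Disjoint (C12 ∪ C3) C4 := Finset.disjoint_union_left.mpr ⟨hd2, hd3⟩
  have htot : ∀ x : Fin n → ZMod 2,
      nbrCount C12 x + nbrCount C3 x + nbrCount C4 x = n := by
    intro x
    rw [← nbrCount_union hd1, ← nbrCount_union hd123, hcover, nbrCount_univ]
  have hn4 : 4 ≤ n := by
    obtain ⟨x, hx⟩ := hne3
    obtain ⟨a, b, c⟩ := h3 x hx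
    have := htot x
    omega
  have hy : ∀ y : Fin (n+1) → ZMod 2, ∃ x α, y = Fin.snoc x α :=
    fun y => ⟨Fin.init y, y (Fin.last n), (Fin.snoc_init_self y).symm⟩
  -- membership characterizations
  have memG1 : ∀ (x : Fin n → ZMod 2) (α : ZMod 2),
      (Fin.snoc x α : Fin (n+1) → ZMod 2) ∈ G1 ↔ x ∈ C12 ∧ ∑ i, x i = α := by
    intro x α; rw [hG1]; exact mem_image_snoc _ _ _ _
  have memG4 : ∀ (x : Fin n → ZMod 2) (α : ZMod 2),
      (Fin.snoc x α : Fin (n+1) → ZMod 2) ∈ G4 ↔ x ∈ C4 ∧ ∑ i, x i + 1 = α := by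
    intro x α; rw [hG4]; exact mem_image_snoc _ _ _ _
  have key1 : ∀ (x : Fin n → ZMod 2) (α : ZMod 2),
      nbrCount G1 (Fin.snoc x α) =
        if (∑ i, x i) = α then 0 else (if x ∈ C12 then 1 else 0) + nbrCount C12 x := by
    intro x α; rw [hG1]; exact nbrCount_image_snoc0 _ _ _
  have key4 : ∀ (x : Fin n → ZMod 2) (α : ZMod 2),
      nbrCount G4 (Fin.snoc x α) =
        if (∑ i, x i) + 1 = α then 0 else (if x ∈ C4 then 1 else 0) + nbrCount C4 x := by
    intro x α; rw [hG4]; exact nbrCount_image_snoc _ _ _ _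
  have hexist : ∀ (G : Finset (Fin (n+1) → ZMod 2)) (y : Fin (n+1) → ZMod 2),
      (∃ g ∈ G, hammingDist y g = 1) ↔ nbrCount G y ≠ 0 := by
    intro G y
    unfold nbrCount
    rw [Ne, Finset.card_eq_zero, ← ne_eq, ← Finset.nonempty_iff_ne_empty,
      Finset.filter_nonempty_iff]
  have memG2 : ∀ (x : Fin n → ZMod 2) (α : ZMod 2),
      (Fin.snoc x α : Fin (n+1) → ZMod 2) ∈ G2 ↔ (x ∈ C12 ∪ C3) ∧ ∑ i, x i + 1 = α := by
    intro x α
    rw [hG2, Finset.mem_filter]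
    simp only [Finset.mem_univ, true_and]
    rw [hexist G1, memG1 x α, key1 x α]
    rcases zmod2_cases α (∑ i, x i) with rfl | rfl
    · rw [if_pos rfl]
      constructor
      · rintro ⟨-, h⟩; exact absurd rfl h
      · rintro ⟨-, h⟩; exact absurd h (zmod2_succ_ne _)
    · rw [if_neg (zmod2_ne_succ _)]
      constructor
      · rintro ⟨-, h⟩
        refine ⟨?_, rfl⟩
        by_cases hx : x ∈ C12
        · exact Finset.mem_union_left _ hx
        · rw [if_neg hx, zero_add] at h
          rcases hcov x with h12 | h3' | h4'
          · exact absurd h12 hx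
          · exact Finset.mem_union_right _ h3'
          · exact absurd (h4 _ h4').1 h
      · rintro ⟨hx, -⟩
        refine ⟨fun hc => zmod2_ne_succ _ hc.2, ?_⟩
        rcases Finset.mem_union.mp hx with h12 | h3'
        · rw [if_pos h12]; omega
        · rw [if_neg (Finset.disjoint_right.mp hd1 h3'), zero_add, (h3 _ h3').1]; omega
  have memG3 : ∀ (x : Fin n → ZMod 2) (α : ZMod 2),
      (Fin.snoc x α : Fin (n+1) → ZMod 2) ∈ G3 ↔ (x ∈ C3 ∪ C4) ∧ ∑ i, x i = α := by
    intro x α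
    rw [hG3, Finset.mem_filter]
    simp only [Finset.mem_univ, true_and]
    rw [hexist G4, memG4 x α, key4 x α]
    rcases zmod2_cases α (∑ i, x i) with rfl | rfl
    · rw [if_neg (zmod2_succ_ne _)]
      constructor
      · rintro ⟨-, h⟩
        refine ⟨?_, rfl⟩
        by_cases hx : x ∈ C4
        · exact Finset.mem_union_right _ hx
        · rw [if_neg hx, zero_add] at h
          rcases hcov x with h12 | h3' | h4'
          · exact absurd (h1 _ h12).2.2 h
          · exact Finset.mem_union_left _ h3'
          · exact absurd h4' hx
      · rintro ⟨hx, -⟩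
        refine ⟨fun hc => zmod2_succ_ne _ hc.2, ?_⟩
        rcases Finset.mem_union.mp hx with h3' | h4'
        · rw [if_neg (Finset.disjoint_left.mp hd3 h3'), zero_add, (h3 _ h3').2.2]; omega
        · rw [if_pos h4']; omega
    · rw [if_pos rfl]
      constructor
      · rintro ⟨-, h⟩; exact absurd rfl h
      · rintro ⟨-, h⟩; exact absurd h (zmod2_ne_succ _)
  -- image forms of G2 and G3
  have hG2' : G2 = (C12 ∪ C3).image (fun z => Fin.snoc z (∑ i, z i + 1)) := by
    ext y
    obtain ⟨x, α, rfl⟩ := hy y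
    rw [memG2 x α, mem_image_snoc]
  have hG3' : G3 = (C3 ∪ C4).image (fun z => Fin.snoc z (∑ i, z i)) := by
    ext y
    obtain ⟨x, α, rfl⟩ := hy y
    rw [memG3 x α, mem_image_snoc]
  have key2 : ∀ (x : Fin n → ZMod 2) (α : ZMod 2),
      nbrCount G2 (Fin.snoc x α) =
        if (∑ i, x i) + 1 = α then 0
        else (if x ∈ C12 ∪ C3 then 1 else 0) + nbrCount (C12 ∪ C3) x := by
    intro x α; rw [hG2']; exact nbrCount_image_snoc _ _ _ _
  have key3 : ∀ (x : Fin n → ZMod 2) (α : ZMod 2),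
      nbrCount G3 (Fin.snoc x α) =
        if (∑ i, x i) = α then 0
        else (if x ∈ C3 ∪ C4 then 1 else 0) + nbrCount (C3 ∪ C4) x := by
    intro x α; rw [hG3']; exact nbrCount_image_snoc0 _ _ _
  refine ⟨⟨?_, ?_, ?_, ?_, ?_, ?_, ?_, ?_, ?_, ?_, ?_⟩, ?_, ?_, ?_, ?_⟩
  · -- Disjoint G1 G2
    rw [Finset.disjoint_left]
    intro y hy1 hy2
    obtain ⟨x, α, rfl⟩ := hy y
    obtain ⟨-, e1⟩ := (memG1 x α).mp hy1
    obtain ⟨-, e2⟩ := (memG2 x α).mp hy2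
    exact zmod2_ne_succ _ (e1.trans e2.symm)
  · -- Disjoint G1 G3
    rw [Finset.disjoint_left]
    intro y hy1 hy2
    obtain ⟨x, α, rfl⟩ := hy y
    obtain ⟨hx1, -⟩ := (memG1 x α).mp hy1
    obtain ⟨hx3, -⟩ := (memG3 x α).mp hy2
    rcases Finset.mem_union.mp hx3 with h | h
    · exact Finset.disjoint_left.mp hd1 hx1 h
    · exact Finset.disjoint_left.mp hd2 hx1 h
  · -- Disjoint G1 G4
    rw [Finset.disjoint_left]
    intro y hy1 hy2
    obtain ⟨x, α, rfl⟩ := hy y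
    exact Finset.disjoint_left.mp hd2 ((memG1 x α).mp hy1).1 ((memG4 x α).mp hy2).1
  · -- Disjoint G2 G3
    rw [Finset.disjoint_left]
    intro y hy1 hy2
    obtain ⟨x, α, rfl⟩ := hy y
    obtain ⟨-, e1⟩ := (memG2 x α).mp hy1
    obtain ⟨-, e2⟩ := (memG3 x α).mp hy2
    exact zmod2_ne_succ _ (e2.trans e1.symm)
  · -- Disjoint G2 G4
    rw [Finset.disjoint_left]
    intro y hy1 hy2
    obtain ⟨x, α, rfl⟩ := hy y
    obtain ⟨hx1, -⟩ := (memG2 x α).mp hy1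
    obtain ⟨hx4, -⟩ := (memG4 x α).mp hy2
    rcases Finset.mem_union.mp hx1 with h | h
    · exact Finset.disjoint_left.mp hd2 h hx4
    · exact Finset.disjoint_left.mp hd3 h hx4
  · -- Disjoint G3 G4
    rw [Finset.disjoint_left]
    intro y hy1 hy2
    obtain ⟨x, α, rfl⟩ := hy y
    obtain ⟨-, e1⟩ := (memG3 x α).mp hy1
    obtain ⟨-, e2⟩ := (memG4 x α).mp hy2
    exact zmod2_ne_succ _ (e1.trans e2.symm)
  · -- cover
    ext y
    simp only [Finset.mem_union, Finset.mem_univ, iff_true]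
    obtain ⟨x, α, rfl⟩ := hy y
    rcases zmod2_cases α (∑ i, x i) with rfl | rfl
    · rcases hcov x with h | h | h
      · exact Or.inl (Or.inl (Or.inl ((memG1 x _).mpr ⟨h, rfl⟩)))
      · exact Or.inl (Or.inr ((memG3 x _).mpr ⟨Finset.mem_union_left _ h, rfl⟩))
      · exact Or.inl (Or.inr ((memG3 x _).mpr ⟨Finset.mem_union_right _ h, rfl⟩))
    · rcases hcov x with h | h | h
      · exact Or.inl (Or.inl (Or.inr ((memG2 x _).mpr ⟨Finset.mem_union_left _ h, rfl⟩)))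
      · exact Or.inl (Or.inl (Or.inr ((memG2 x _).mpr ⟨Finset.mem_union_right _ h, rfl⟩)))
      · exact Or.inr ((memG4 x _).mpr ⟨h, rfl⟩)
  · -- G1 nonempty
    obtain ⟨x, hx⟩ := hne1
    exact ⟨_, (memG1 x _).mpr ⟨hx, rfl⟩⟩
  · -- G2 nonempty
    obtain ⟨x, hx⟩ := hne1
    exact ⟨_, (memG2 x _).mpr ⟨Finset.mem_union_left _ hx, rfl⟩⟩
  · -- G3 nonempty
    obtain ⟨x, hx⟩ := hne3
    exact ⟨_, (memG3 x _).mpr ⟨Finset.mem_union_left _ hx, rfl⟩⟩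
  · -- G4 nonempty
    obtain ⟨x, hx⟩ := hne4
    exact ⟨_, (memG4 x _).mpr ⟨hx, rfl⟩⟩
  · -- rows for G1
    intro y hy1
    obtain ⟨x, α, rfl⟩ := hy y
    obtain ⟨hx, rfl⟩ := (memG1 x α).mp hy1
    have hx3 : x ∉ C3 := Finset.disjoint_left.mp hd1 hx
    have hx4 : x ∉ C4 := Finset.disjoint_left.mp hd2 hx
    obtain ⟨a1, a2, a3⟩ := h1 x hx
    refine ⟨?_, ?_, ?_, ?_⟩
    · rw [key1, if_pos rfl]
    · rw [key2, if_neg (zmod2_succ_ne _), if_pos (Finset.mem_union_left _ hx),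
        nbrCount_union hd1, a1, a2]
      omega
    · rw [key3, if_pos rfl]
    · rw [key4, if_neg (zmod2_succ_ne _), if_neg (by simp [hx4]), a3]
  · -- rows for G2
    intro y hy2
    obtain ⟨x, α, rfl⟩ := hy y
    obtain ⟨hx, rfl⟩ := (memG2 x α).mp hy2
    refine ⟨?_, ?_, ?_, ?_⟩
    · rw [key1, if_neg (zmod2_ne_succ _)]
      rcases Finset.mem_union.mp hx with h | h
      · rw [if_pos h, (h1 x h).1]
      · rw [if_neg (Finset.disjoint_right.mp hd1 h), (h3 x h).1]
    · rw [key2, if_pos rfl]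
    · rw [key3, if_neg (zmod2_ne_succ _), nbrCount_union hd3]
      rcases Finset.mem_union.mp hx with h | h
      · have hx3 : x ∉ C3 := Finset.disjoint_left.mp hd1 h
        have hx4 : x ∉ C4 := Finset.disjoint_left.mp hd2 h
        rw [if_neg (by simp [hx3, hx4]), (h1 x h).2.1, (h1 x h).2.2]
        omega
      · rw [if_pos (Finset.mem_union_left _ h), (h3 x h).2.1, (h3 x h).2.2]
        omega
    · rw [key4, if_pos rfl]
  · -- rows for G3
    intro y hy3
    obtain ⟨x, α, rfl⟩ := hy y
    obtain ⟨hx, rfl⟩ := (memG3 x α).mp hy3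
    refine ⟨?_, ?_, ?_, ?_⟩
    · rw [key1, if_pos rfl]
    · rw [key2, if_neg (zmod2_succ_ne _), nbrCount_union hd1]
      rcases Finset.mem_union.mp hx with h | h
      · rw [if_pos (Finset.mem_union_right _ h),
          (h3 x h).1, (h3 x h).2.1]
        omega
      · have hx12 : x ∉ C12 := Finset.disjoint_right.mp hd2 h
        have hx3 : x ∉ C3 := Finset.disjoint_right.mp hd3 h
        rw [if_neg (by simp [hx12, hx3]), (h4 x h).1, (h4 x h).2.1]
        omega
    · rw [key3, if_pos rfl]
    · rw [key4, if_neg (zmod2_succ_ne _)]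
      rcases Finset.mem_union.mp hx with h | h
      · rw [if_neg (Finset.disjoint_left.mp hd3 h), (h3 x h).2.2]
      · rw [if_pos h, (h4 x h).2.2]
  · -- rows for G4
    intro y hy4
    obtain ⟨x, α, rfl⟩ := hy y
    obtain ⟨hx, rfl⟩ := (memG4 x α).mp hy4
    have hx12 : x ∉ C12 := Finset.disjoint_right.mp hd2 hx
    have hx3 : x ∉ C3 := Finset.disjoint_right.mp hd3 hx
    obtain ⟨a1, a2, a3⟩ := h4 x hx
    refine ⟨?_, ?_, ?_, ?_⟩
    · rw [key1, if_neg (zmod2_ne_succ _), if_neg hx12, a1]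
    · rw [key2, if_pos rfl]
    · rw [key3, if_neg (zmod2_ne_succ _), if_pos (Finset.mem_union_right _ hx),
        nbrCount_union hd3, a2, a3]
      omega
    · rw [key4, if_pos rfl]
end
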